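/- arXiv:2404.18571 — 3 statements merged into one kernel-verified Lean document; each statement's English description precedes it below -/
import Mathlib

section
/- Menas's theorem (one direction): Let X be a set and κ a regular uncountable cardinal with κ ≤ |X|. For every function F : [X]^{<ω} → [X]^{<κ}, the set cl_F := { a ∈ [X]^{<κ} : ∀ x ∈ [a]^{<ω}, F(x) ⊆ a } is club in [X]^{<κ}. -/
open Cardinal

universe u

/-- `[X]^{<κ}`: the subsets of `X` of cardinality `< κ`. -/
def SmallSets {α : Type u} (κ : Cardinal.{u}) (X : Set α) : Set (Set α) :=
  {a | a ⊆ X ∧ #a < κ}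

/-- `C` is club in `[X]^{<κ}`: it consists of `<κ`-sized subsets of `X`, is cofinal
under `⊆`, and is closed under unions of `⊆`-increasing chains of length `< κ`. -/
def IsClubIn {α : Type u} (κ : Cardinal.{u}) (X : Set α) (C : Set (Set α)) : Prop :=
  C ⊆ SmallSets κ X ∧
  (∀ a ∈ SmallSets κ X, ∃ b ∈ C, a ⊆ b) ∧
  (∀ (ι : Type u) [LinearOrder ι], Nonempty ι → #ι < κ →
    ∀ f : ι → Set α, Monotone f → (∀ i, f i ∈ C) → (⋃ i, f i) ∈ C)

/-- `S` is stationary in `[X]^{<κ}`: it meets every club subset of `[X]^{<κ}`. -/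
def IsStationaryIn {α : Type u} (κ : Cardinal.{u}) (X : Set α) (S : Set (Set α)) : Prop :=
  S ⊆ SmallSets κ X ∧ ∀ C, IsClubIn κ X C → (S ∩ C).Nonempty

/-- A finite set contained in a monotone union lies in one of the sets. -/
lemma finite_subset_mono_iUnion {α : Type u} {ι : Type v} [LinearOrder ι] [Nonempty ι]
    {f : ι → Set α} (hmono : Monotone f) {s : Set α} (hfin : s.Finite)
    (hsub : s ⊆ ⋃ i, f i) : ∃ i, s ⊆ f i := by
  classical
  have key : ∀ x ∈ s, ∃ i, x ∈ f i := by
    intro x hx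
    simpa [Set.mem_iUnion] using hsub hx
  choose! idx hidx using key
  rcases (hfin.toFinset.image idx).eq_empty_or_nonempty with he | hne
  · have : hfin.toFinset = ∅ := by
      by_contra h
      rcases Finset.nonempty_of_ne_empty h with ⟨x, hx⟩
      exact absurd (Finset.mem_image_of_mem idx hx) (by simp [he])
    have hs : s = ∅ := Set.Finite.toFinset_eq_empty.1 this
    inhabit ι
    exact ⟨default, by simp [hs]⟩
  · refine ⟨(hfin.toFinset.image idx).max' hne, fun x hx => ?_⟩
    have hx' : x ∈ hfin.toFinset := hfin.mem_toFinset.2 hx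
    have : idx x ≤ (hfin.toFinset.image idx).max' hne :=
      Finset.le_max' _ _ (Finset.mem_image_of_mem idx hx')
    exact hmono this (hidx x hx)

/-- Finsets of a `<κ`-sized set number `<κ` many, for regular uncountable `κ`. -/
lemma mk_finset_lt {α : Type u} {κ : Cardinal.{u}} (hunc : ℵ₀ < κ) {t : Set α}
    (ht : #t < κ) : #(Finset t) < κ := by
  rcases finite_or_infinite t with h | h
  · haveI := Fintype.ofFinite t
    exact lt_trans (lt_aleph0_of_finite _) hunc
  · rwa [mk_finset_of_infinite]

/-- Menas's theorem, one direction: for `F : [X]^{<ω} → [X]^{<κ}` the set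
`cl_F = { a ∈ [X]^{<κ} | ∀ x ∈ [a]^{<ω}, F x ⊆ a }` is club in `[X]^{<κ}`. -/
theorem stmt6 {α : Type u} (κ : Cardinal.{u}) (hreg : κ.IsRegular) (hunc : ℵ₀ < κ)
    (X : Set α) (hκX : κ ≤ #X)
    (F : Set α → Set α) (hF : ∀ s : Set α, s ⊆ X → s.Finite → F s ∈ SmallSets κ X) :
    IsClubIn κ X {a | a ∈ SmallSets κ X ∧ ∀ s ⊆ a, s.Finite → F s ⊆ a} := by
  classical
  refine ⟨fun a ha => ha.1, ?_, ?_⟩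
  · -- cofinality
    intro a ha
    set H : Set α → Set α := fun t => t ∪ ⋃ s : Finset t, F (Subtype.val '' (s : Set t)) with hH
    set g : ℕ → Set α := fun n => H^[n] a with hg
    have hg0 : g 0 = a := rfl
    have hgsucc : ∀ n, g (n + 1) = H (g n) := fun n => Function.iterate_succ_apply' H n a
    -- invariant
    have hinv : ∀ n, g n ⊆ X ∧ #(g n) < κ := by
      intro n
      induction n with
      | zero => exact ⟨ha.1, ha.2⟩
      | succ n ih =>
        rw [hgsucc]
        constructor
        · intro x hx
          rcases hx with hx | hx
          · exact ih.1 hx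
          · rcases Set.mem_iUnion.1 hx with ⟨s, hs⟩
            have hsub : Subtype.val '' (s : Set (g n)) ⊆ X :=
              fun y hy => ih.1 (by rcases hy with ⟨⟨y, hy'⟩, _, rfl⟩; exact hy')
            exact (hF _ hsub ((s : Set (g n)).toFinite.image _)).1 hs
        · refine (mk_union_le _ _).trans_lt (Cardinal.add_lt_of_lt hreg.aleph0_le ih.2 ?_)
          refine mk_iUnion_le_sum_mk.trans_lt (sum_lt_of_isRegular hreg
            (mk_finset_lt hunc ih.2) fun s => ?_)
          have hsub : Subtype.val '' (s : Set (g n)) ⊆ X :=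
            fun y hy => ih.1 (by rcases hy with ⟨⟨y, hy'⟩, _, rfl⟩; exact hy')
          exact (hF _ hsub ((s : Set (g n)).toFinite.image _)).2
    have hmono : Monotone g := by
      apply monotone_nat_of_le_succ
      intro n
      rw [hgsucc]
      exact Set.subset_union_left
    set b : Set α := ⋃ n : ULift.{u} ℕ, g n.down with hb
    have hbeq : b = ⋃ n : ℕ, g n := by
      ext x
      simp only [hb, Set.mem_iUnion]
      exact ⟨fun ⟨n, h⟩ => ⟨n.down, h⟩, fun ⟨n, h⟩ => ⟨⟨n⟩, h⟩⟩
    refine ⟨b, ⟨⟨?_, ?_⟩, ?_⟩, ?_⟩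
    · exact Set.iUnion_subset fun n => (hinv n.down).1
    · refine mk_iUnion_le_sum_mk.trans_lt (sum_lt_of_isRegular hreg ?_
        fun n => (hinv n.down).2)
      simpa using hunc
    · intro s hs hsfin
      rw [hbeq] at hs ⊢
      obtain ⟨n, hsn⟩ := finite_subset_mono_iUnion hmono hsfin hs
      -- lift s to a Finset of ↥(g n)
      set t : Finset (g n) := hsfin.toFinset.subtype (· ∈ g n) with ht
      have hts : Subtype.val '' (t : Set (g n)) = s := by
        ext x
        constructor
        · rintro ⟨⟨y, hy⟩, hyt, rfl⟩
          have := Finset.mem_subtype.1 hyt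
          exact hsfin.mem_toFinset.1 this
        · intro hx
          exact ⟨⟨x, hsn hx⟩, Finset.mem_subtype.2 (hsfin.mem_toFinset.2 hx), rfl⟩
      have : F s ⊆ g (n + 1) := by
        rw [hgsucc, hH]
        intro y hy
        refine Set.mem_union_right _ (Set.mem_iUnion.2 ⟨t, ?_⟩)
        rwa [hts]
      exact this.trans (Set.subset_iUnion g (n + 1))
    · rw [hbeq]
      exact hg0 ▸ Set.subset_iUnion g 0
  · -- closure under chains
    intro ι _ hne hι f hmono hf
    haveI := hne
    refine ⟨⟨?_, ?_⟩, ?_⟩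
    · exact Set.iUnion_subset fun i => (hf i).1.1
    · exact mk_iUnion_le_sum_mk.trans_lt (sum_lt_of_isRegular hreg hι fun i => (hf i).1.2)
    · intro s hs hsfin
      obtain ⟨i, hsi⟩ := finite_subset_mono_iUnion hmono hsfin hs
      exact ((hf i).2 s hsi hsfin).trans (Set.subset_iUnion f i)
end

section
/- Menas's theorem (other direction): Let X be a set and κ a regular uncountable cardinal with κ ≤ |X|. For every club C ⊆ [X]^{<κ} there exists a function F : [X]^{<ω} → [X]^{<κ} such that cl_F := { a ∈ [X]^{<κ} : ∀ x ∈ [a]^{<ω}, F(x) ⊆ a } is a subset of C. -/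
open Cardinal

universe u

/-!
A set closed under unions of chains of length `< κ` is closed under unions of directed families
of fewer than `κ` sets. This goes by induction on the size of the index set: a finite directed
family has a largest member, a countable one contains a cofinal sequence, and a directed family of
uncountable size `λ`, well ordered in type `ord λ`, is the increasing union of the subfamilies
indexed by the closures of its initial segments under a choice of upper bounds, each of size `< λ`.

Given a club `C`, pick `g` with `a ⊆ g a ∈ C` for every `a ∈ [X]^{<κ}` and put
`F s = g (s ∪ ⋃_{t ⊊ s} F t)`. Then `F` is monotone on finite sets, so for `a ∈ cl_F` the sets
`F s` with `s ∈ [a]^{<ω}` form a directed family in `C` of fewer than `κ` sets whose union is `a`.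
-/

open Set

section BinaryClosure

variable {β : Type u} (op : β → β → β)

def binaryClosure (s : Set β) : Set β :=
  ⋃ n : ℕ, (fun t => t ∪ image2 op t t)^[n] s

variable {op}

theorem subset_binaryClosure (s : Set β) : s ⊆ binaryClosure op s :=
  subset_iUnion_of_subset 0 subset_rfl

theorem binaryClosure_mono : Monotone (binaryClosure op) := fun _ _ h =>
  iUnion_mono fun n =>
    Monotone.iterate (fun _ _ h => union_subset_union h (image2_subset h h)) n h

theorem op_mem_binaryClosure {s : Set β} {x y : β} (hx : x ∈ binaryClosure op s)
    (hy : y ∈ binaryClosure op s) : op x y ∈ binaryClosure op s := by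
  have hmono : Monotone fun n => (fun t => t ∪ image2 op t t)^[n] s :=
    monotone_nat_of_le_succ fun n => by
      rw [Function.iterate_succ_apply']
      exact subset_union_left
  obtain ⟨m, hm⟩ := mem_iUnion.1 hx
  obtain ⟨n, hn⟩ := mem_iUnion.1 hy
  refine mem_iUnion.2 ⟨max m n + 1, ?_⟩
  rw [Function.iterate_succ_apply']
  exact subset_union_right <|
    mem_image2_of_mem (hmono (le_max_left m n) hm) (hmono (le_max_right m n) hn)

theorem mk_binaryClosure_le (s : Set β) : #(binaryClosure op s) ≤ max #s ℵ₀ := by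
  have hℵ₀ : ℵ₀ ≤ max #s ℵ₀ := le_max_right _ _
  have hstep : ∀ n, #((fun t => t ∪ image2 op t t)^[n] s) ≤ max #s ℵ₀ := by
    intro n
    induction n with
    | zero => exact le_max_left _ _
    | succ n ih =>
      rw [Function.iterate_succ_apply']
      calc _ ≤ _ + _ * _ :=
            (mk_union_le _ _).trans (add_le_add ih (mk_image2_le.trans (mul_le_mul' ih ih)))
        _ = max #s ℵ₀ := by rw [mul_eq_self hℵ₀, add_eq_self hℵ₀]
  calc #(binaryClosure op s) ≤ ℵ₀ * max #s ℵ₀ := by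
        refine (mk_sUnion_le _).trans (mul_le_mul' (countable_range _).le_aleph0 (ciSup_le' ?_))
        rintro ⟨_, n, rfl⟩
        exact hstep n
    _ = max #s ℵ₀ := aleph0_mul_eq hℵ₀

end BinaryClosure

section DirectedUnion

variable {α : Type u} {κ : Cardinal.{u}} {C : Set (Set α)}

def IsChainClosed (κ : Cardinal.{u}) (C : Set (Set α)) : Prop :=
  ∀ (ι : Type u) [LinearOrder ι], Nonempty ι → #ι < κ →
    ∀ f : ι → Set α, Monotone f → (∀ i, f i ∈ C) → (⋃ i, f i) ∈ C

theorem iUnion_mem_of_directed_of_finite {ι : Type u} [Finite ι] [Nonempty ι] {f : ι → Set α}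
    (hf : Directed (· ⊆ ·) f) (hfC : ∀ i, f i ∈ C) : ⋃ i, f i ∈ C := by
  obtain ⟨z, hz⟩ : ∃ z, ∀ i, f i ⊆ f z := hf.finite_le id
  rw [(iUnion_subset hz).antisymm (subset_iUnion f z)]
  exact hfC z

theorem IsChainClosed.iUnion_mem_of_directed_of_countable (hC : IsChainClosed κ C)
    {ι : Type u} [Countable ι] [Nonempty ι] (hκ : ℵ₀ < κ) {f : ι → Set α}
    (hf : Directed (· ⊆ ·) f) (hfC : ∀ i, f i ∈ C) : ⋃ i, f i ∈ C := by
  have := Encodable.ofCountable ι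
  inhabit ι
  have hunion : ⋃ n : ULift.{u} ℕ, f (hf.sequence f n.down) = ⋃ i, f i :=
    (iUnion_subset fun n => subset_iUnion f _).antisymm
      (iUnion_mono' fun i => ⟨⟨_⟩, hf.le_sequence i⟩)
  rw [← hunion]
  exact hC _ inferInstance (by simpa using hκ) _ (fun _ _ h => hf.sequence_mono h) fun _ => hfC _

theorem IsChainClosed.iUnion_mem_of_directed_of_forall_mk_lt (hC : IsChainClosed κ C)
    {ι : Type u} [Nonempty ι] (hι : #ι < κ) (hℵ₀ : ℵ₀ < #ι)
    (hsmaller : ∀ (ι' : Type u) [Nonempty ι'], #ι' < #ι → ∀ f : ι' → Set α,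
      Directed (· ⊆ ·) f → (∀ i, f i ∈ C) → ⋃ i, f i ∈ C)
    {f : ι → Set α} (hf : Directed (· ⊆ ·) f) (hfC : ∀ i, f i ∈ C) : ⋃ i, f i ∈ C := by
  obtain ⟨_, _, hord⟩ := exists_ord_eq_type_lt ι
  choose ub hub_left hub_right using hf
  set E : ι → Set ι := fun i => binaryClosure ub (Iic i)
  have hmem : ∀ i, i ∈ E i := fun i => subset_binaryClosure _ self_mem_Iic
  have hsmall : ∀ i, #(E i) < #ι := fun i =>
    (mk_binaryClosure_le _).trans_lt (max_lt (mk_Iic_lt i hord hℵ₀.le) hℵ₀)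
  have hpiece : ∀ i, ⋃ j : E i, f j ∈ C := fun i =>
    have : Nonempty (E i) := ⟨⟨i, hmem i⟩⟩
    hsmaller (E i) (hsmall i) _
      (fun j k => ⟨⟨_, op_mem_binaryClosure j.2 k.2⟩, hub_left j k, hub_right j k⟩) fun j => hfC j
  have hunion : ⋃ i, ⋃ j : E i, f j = ⋃ i, f i :=
    Subset.antisymm (iUnion_subset fun i => iUnion_subset fun j => subset_iUnion f j)
      (iUnion_mono' fun i => ⟨i, subset_iUnion (fun j : E i => f j) ⟨i, hmem i⟩⟩)
  rw [← hunion]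
  refine hC ι ‹_› hι _ (fun i i' h => ?_) hpiece
  exact iUnion_mono' fun j => ⟨⟨j, binaryClosure_mono (Iic_subset_Iic.2 h) j.2⟩, subset_rfl⟩

theorem IsChainClosed.iUnion_mem_of_directed (hC : IsChainClosed κ C) {ι : Type u} [Nonempty ι]
    (hι : #ι < κ) {f : ι → Set α} (hf : Directed (· ⊆ ·) f) (hfC : ∀ i, f i ∈ C) :
    ⋃ i, f i ∈ C := by
  induction hμ : #ι using WellFoundedLT.induction generalizing ι with
  | ind μ ih =>
  subst hμ
  rcases lt_trichotomy #ι ℵ₀ with hfin | hcount | huncount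
  · have := lt_aleph0_iff_finite.1 hfin
    exact iUnion_mem_of_directed_of_finite hf hfC
  · have := mk_le_aleph0_iff.1 hcount.le
    exact hC.iUnion_mem_of_directed_of_countable (hcount ▸ hι) hf hfC
  · exact hC.iUnion_mem_of_directed_of_forall_mk_lt hι huncount
      (fun ι' _ hι' f hf hfC => ih _ hι' (hι'.trans hι) hf hfC rfl) hf hfC

end DirectedUnion

section SmallSets

variable {α : Type u} {κ : Cardinal.{u}} {X : Set α}

theorem mem_smallSets_of_finite (hκ : ℵ₀ < κ) {s : Set α} (hs : s ⊆ X) (hfin : s.Finite) :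
    s ∈ SmallSets κ X :=
  ⟨hs, hfin.lt_aleph0.trans hκ⟩

theorem union_mem_smallSets (hκ : ℵ₀ ≤ κ) {s t : Set α} (hs : s ∈ SmallSets κ X)
    (ht : t ∈ SmallSets κ X) : s ∪ t ∈ SmallSets κ X :=
  ⟨union_subset hs.1 ht.1, (mk_union_le s t).trans_lt (add_lt_of_lt hκ hs.2 ht.2)⟩

theorem iUnion_mem_smallSets_of_finite (hκ : ℵ₀ ≤ κ) {ι : Type u} [Finite ι] {f : ι → Set α}
    (hf : ∀ i, f i ∈ SmallSets κ X) : ⋃ i, f i ∈ SmallSets κ X := by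
  refine ⟨iUnion_subset fun i => (hf i).1, ?_⟩
  cases isEmpty_or_nonempty ι
  · simpa using aleph0_pos.trans_le hκ
  obtain ⟨i, hi⟩ := exists_eq_ciSup_of_finite (f := fun i => #(f i))
  calc #(⋃ i, f i) ≤ #ι * ⨆ i, #(f i) := mk_iUnion_le f
    _ < κ := mul_lt_of_lt hκ (lt_aleph0_of_finite ι |>.trans_le hκ) (hi ▸ (hf i).2)

end SmallSets

section FiniteSubsetHull

variable {α : Type u} (g : Set α → Set α)

/-- `finiteSubsetHull g s = g (s ∪ ⋃_{t ⊊ s} finiteSubsetHull g t)` for finite `s`; for infinite `s`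
the union is empty, which is what makes `ncard` decrease along the recursion. -/
noncomputable def finiteSubsetHull (s : Set α) : Set α :=
  g (s ∪ ⋃ t : {t // t ⊂ s ∧ s.Finite}, finiteSubsetHull t.1)
termination_by s.ncard
decreasing_by exact ncard_lt_ncard t.2.1 t.2.2

variable {g}

theorem subset_finiteSubsetHull (hg : ∀ a, a ⊆ g a) (s : Set α) : s ⊆ finiteSubsetHull g s := by
  rw [finiteSubsetHull]
  exact subset_union_left.trans (hg _)

theorem finiteSubsetHull_mono (hg : ∀ a, a ⊆ g a) {s t : Set α} (hs : s.Finite) (hts : t ⊆ s) :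
    finiteSubsetHull g t ⊆ finiteSubsetHull g s := by
  obtain rfl | hts := hts.eq_or_ssubset
  · exact subset_rfl
  rw [finiteSubsetHull.eq_1 g s]
  exact (subset_iUnion (fun t' : {t' // t' ⊂ s ∧ s.Finite} => finiteSubsetHull g t'.1)
    ⟨t, hts, hs⟩).trans (subset_union_right.trans (hg _))

theorem finiteSubsetHull_mem {κ : Cardinal.{u}} {X : Set α} {D : Set (Set α)} (hκ : ℵ₀ < κ)
    (hD : D ⊆ SmallSets κ X) (hg : ∀ a ∈ SmallSets κ X, g a ∈ D) {s : Set α} (hs : s ⊆ X)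
    (hfin : s.Finite) : finiteSubsetHull g s ∈ D := by
  induction hn : s.ncard using Nat.strong_induction_on generalizing s with
  | _ n ih =>
  have : Finite {t // t ⊂ s ∧ s.Finite} :=
    (hfin.finite_subsets.subset fun t (ht : t ⊂ s ∧ s.Finite) => ht.1.subset).to_subtype
  rw [finiteSubsetHull]
  refine hg _ (union_mem_smallSets hκ.le (mem_smallSets_of_finite hκ hs hfin)
    (iUnion_mem_smallSets_of_finite hκ.le fun t => hD ?_))
  exact ih _ (hn ▸ ncard_lt_ncard t.2.1 hfin) (t.2.1.subset.trans hs) (hfin.subset t.2.1.subset) rfl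

end FiniteSubsetHull

theorem mk_finset_lt_s7 {β : Type u} {κ : Cardinal.{u}} (hκ : ℵ₀ < κ) (hβ : #β < κ) :
    #(Finset β) < κ := by
  classical
  calc #(Finset β) ≤ #(List β) := mk_le_of_surjective List.toFinset_surjective
    _ ≤ max ℵ₀ #β := mk_list_le_max β
    _ < κ := max_lt hκ hβ

theorem IsChainClosed.mem_of_finiteSubsetHull_subset {α : Type u} {κ : Cardinal.{u}} {X : Set α}
    {C : Set (Set α)} {g : Set α → Set α} (hC : IsChainClosed κ C) (hκ : ℵ₀ < κ)
    (hg : ∀ a, a ⊆ g a) (hH : ∀ s ⊆ X, s.Finite → finiteSubsetHull g s ∈ C) {a : Set α}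
    (ha : a ∈ SmallSets κ X) (hcl : ∀ s ⊆ a, s.Finite → finiteSubsetHull g s ⊆ a) : a ∈ C := by
  set f : Finset a → Set α := fun t => finiteSubsetHull g (Subtype.val '' (t : Set a))
  have hfin : ∀ t : Finset a, (Subtype.val '' (t : Set a)).Finite := fun t => t.finite_toSet.image _
  have hmono : Monotone f := fun t t' h =>
    finiteSubsetHull_mono hg (hfin t') (image_mono (Finset.coe_subset.2 h))
  have hcover : ⋃ t, f t = a := by
    refine Subset.antisymm (iUnion_subset fun t => hcl _ (Subtype.coe_image_subset _ _) (hfin t)) ?_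
    intro x hx
    refine mem_iUnion.2 ⟨{⟨x, hx⟩}, subset_finiteSubsetHull hg _ ?_⟩
    simp
  rw [← hcover]
  exact hC.iUnion_mem_of_directed (mk_finset_lt_s7 hκ ha.2) hmono.directed_le
    fun t => hH _ ((Subtype.coe_image_subset _ _).trans ha.1) (hfin t)

theorem stmt7_general {α : Type u} (κ : Cardinal.{u}) (hunc : ℵ₀ < κ)
    (X : Set α)
    (C : Set (Set α)) (hC : IsClubIn κ X C) :
    ∃ F : Set α → Set α, (∀ s : Set α, s ⊆ X → s.Finite → F s ∈ SmallSets κ X) ∧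
      {a | a ∈ SmallSets κ X ∧ ∀ s ⊆ a, s.Finite → F s ⊆ a} ⊆ C := by
  obtain ⟨hCsmall, hcofinal, hchain⟩ := hC
  have : ∀ a, ∃ b, a ⊆ b ∧ (a ∈ SmallSets κ X → b ∈ C) := fun a => by
    by_cases ha : a ∈ SmallSets κ X
    · obtain ⟨b, hb, hab⟩ := hcofinal a ha
      exact ⟨b, hab, fun _ => hb⟩
    · exact ⟨a, subset_rfl, fun h => absurd h ha⟩
  choose g hg_sub hg_mem using this
  have hH : ∀ s ⊆ X, s.Finite → finiteSubsetHull g s ∈ C := fun s hs hfin =>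
    finiteSubsetHull_mem hunc hCsmall hg_mem hs hfin
  exact ⟨finiteSubsetHull g, fun s hs hfin => hCsmall (hH s hs hfin),
    fun a ⟨ha, hcl⟩ => IsChainClosed.mem_of_finiteSubsetHull_subset hchain hunc hg_sub hH ha hcl⟩

/-- Menas's theorem, other direction: every club `C ⊆ [X]^{<κ}` contains `cl_F` for
some `F : [X]^{<ω} → [X]^{<κ}`. -/
theorem stmt7 {α : Type u} (κ : Cardinal.{u}) (hreg : κ.IsRegular) (hunc : ℵ₀ < κ)
    (X : Set α) (hκX : κ ≤ #X)
    (C : Set (Set α)) (hC : IsClubIn κ X C) :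
    ∃ F : Set α → Set α, (∀ s : Set α, s ⊆ X → s.Finite → F s ∈ SmallSets κ X) ∧
      {a | a ∈ SmallSets κ X ∧ ∀ s ⊆ a, s.Finite → F s ⊆ a} ⊆ C :=
  stmt7_general κ hunc X C hC
end

section
/- Suppose S ⊆ μ⁺ ∩ cof(μ) is stationary and (S_α)_{α ∈ S} is a disjoint stationary sequence on μ⁺. Then the approachability property AP_μ fails, i.e., μ⁺ ∉ I[μ⁺]. -/
open Cardinal

universe u

/-- The order type of a set in a well-ordered type. -/
noncomputable def otp {β : Type u} [LinearOrder β] [WellFoundedLT β] (E : Set β) :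
    Ordinal.{u} :=
  Ordinal.type ((· < ·) : E → E → Prop)

/-- `C` is club in the ordinal `Λ`: `C ⊆ Λ`, `C` is unbounded in `Λ` and closed. -/
def ClubInOrd (Λ : Ordinal.{0}) (C : Set Ordinal.{0}) : Prop :=
  C ⊆ Set.Iio Λ ∧ (∀ β < Λ, ∃ γ ∈ C, β ≤ γ) ∧
  ∀ β < Λ, Order.IsSuccLimit β → (∀ γ < β, ∃ δ ∈ C, γ ≤ δ ∧ δ < β) → β ∈ C

/-- `S` is stationary in the ordinal `Λ`. -/
def StationaryInOrd (Λ : Ordinal.{0}) (S : Set Ordinal.{0}) : Prop :=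
  S ⊆ Set.Iio Λ ∧ ∀ C, ClubInOrd Λ C → (S ∩ C).Nonempty

/-- `γ` is approachable with respect to the sequence `(a α)`: there is `E ⊆ γ`
unbounded in `γ` of order type `cf γ` all of whose proper initial segments appear
among `{a α | α < γ}`. -/
def ApproachablePt (a : Ordinal.{0} → Set Ordinal.{0}) (γ : Ordinal.{0}) : Prop :=
  ∃ E : Set Ordinal.{0}, E ⊆ Set.Iio γ ∧ (∀ β < γ, ∃ δ ∈ E, β ≤ δ) ∧
    otp E = Ordinal.lift.{1} γ.cof.ord ∧
    ∀ β < γ, ∃ α < γ, E ∩ Set.Iio β = a α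

/-!
Suppose `(a, C)` witnesses `AP_μ` and fix surjections `f δ` from `μ` onto `δ + 1` for `δ < μ⁺`.
Each pair `k, j` gives the candidate set `f[a k × j]`; by disjointness it lies in `𝒮 α` for at
most one `α ∈ S`, call it `G k j`. Choose `β ∈ S ∩ C` closed under `G` and let `E` witness that
`β` is approachable, enumerated increasingly by `e` in order type `μ`. The sets `f[e[ρ] × ρ]`,
`ρ < μ`, form a club in `[β]^{<μ}`, so one of them lies in `𝒮 β`. But `e[ρ] = E ∩ e ρ = a k` for
some `k < β`, so this is the candidate set of `(k, ρ)` and `G k ρ = β`, whereas `G k ρ < β`.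
-/

open Cardinal Set Order

theorem iSup_lt_ord_of_lift_lt {ι : Type 1} {μ : Cardinal.{0}} (hμ : μ.IsRegular)
    (hι : #ι < Cardinal.lift.{1} μ) {r : ι → Ordinal.{0}} (hr : ∀ i, r i < μ.ord) :
    ⨆ i, r i < μ.ord :=
  Ordinal.lift_iSup_lt_of_lt_cof (by rwa [lift_id'.{0, 1}, ← Ordinal.lift_cof, hμ.cof_ord]) hr

theorem mk_Iio_lt_lift {μ : Cardinal.{0}} {ρ : Ordinal.{0}} (hρ : ρ < μ.ord) :
    #(Iio ρ) < Cardinal.lift.{1} μ := by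
  rw [Cardinal.mk_Iio_ordinal, lift_lt]
  exact lt_ord.1 hρ

theorem exists_closurePoint {c : Cardinal.{0}} (hc : c.IsRegular) (hc' : ℵ₀ < c)
    {F : Ordinal.{0} → Ordinal.{0}} (hF : ∀ δ < c.ord, F δ < c.ord) {β : Ordinal.{0}}
    (hβ : β < c.ord) : ∃ ε < c.ord, β < ε ∧ ∀ γ < ε, F γ < ε := by
  have hlim := isSuccLimit_ord hc.aleph0_le
  let g : Ordinal.{0} → Ordinal.{0} := fun δ => ⨆ γ : Iio (succ δ), succ (F γ)
  have hg : ∀ δ < c.ord, g δ < c.ord := fun δ hδ =>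
    iSup_lt_ord_of_lift_lt hc (mk_Iio_lt_lift (hlim.succ_lt hδ))
      fun γ => hlim.succ_lt (hF γ (γ.2.trans (hlim.succ_lt hδ)))
  have hFg : ∀ γ δ, γ ≤ δ → F γ < g δ := fun γ δ h =>
    (lt_succ _).trans_le (Ordinal.le_iSup (fun γ : Iio (succ δ) => succ (F γ)) ⟨γ, lt_succ_of_le h⟩)
  refine ⟨Ordinal.nfp g (succ β), Cardinal.nfp_lt_ord_of_isRegular hc hc'.ne' hg (hlim.succ_lt hβ),
    (lt_succ β).trans_le (Ordinal.le_nfp g _), fun γ hγ => ?_⟩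
  obtain ⟨n, hn⟩ := Ordinal.lt_nfp_iff.1 hγ
  calc F γ < g (g^[n] (succ β)) := hFg _ _ hn.le
    _ = g^[n + 1] (succ β) := (Function.iterate_succ_apply' g n _).symm
    _ ≤ Ordinal.nfp g (succ β) := Ordinal.iterate_le_nfp g _ _

theorem ClubInOrd.mem_of_forall_exists_lt {Λ ε : Ordinal.{0}} {C : Set Ordinal.{0}}
    (hC : ClubInOrd Λ C) (hε : ε < Λ) (hε0 : ε ≠ 0) (h : ∀ γ < ε, ∃ δ ∈ C, γ < δ ∧ δ < ε) :
    ε ∈ C := by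
  refine hC.2.2 ε hε ⟨not_isMin_iff_ne_bot.2 hε0, isSuccPrelimit_iff_succ_lt.2 fun γ hγ => ?_⟩
    fun γ hγ => (h γ hγ).imp fun δ ⟨hδ, hγδ, hδε⟩ => ⟨hδ, hγδ.le, hδε⟩
  obtain ⟨δ, -, hγδ, hδε⟩ := h γ hγ
  exact (succ_le_of_lt hγδ).trans_lt hδε

theorem clubInOrd_closurePoints {c : Cardinal.{0}} (hc : c.IsRegular) (hc' : ℵ₀ < c)
    {F : Ordinal.{0} → Ordinal.{0}} (hF : ∀ δ < c.ord, F δ < c.ord) :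
    ClubInOrd c.ord {ε | ε < c.ord ∧ ∀ γ < ε, F γ < ε} := by
  refine ⟨fun ε hε => hε.1, fun β hβ => ?_, fun β hβ hlim happrox => ⟨hβ, fun γ hγ => ?_⟩⟩
  · obtain ⟨ε, hεc, hβε, hε⟩ := exists_closurePoint hc hc' hF hβ
    exact ⟨ε, ⟨hεc, hε⟩, hβε.le⟩
  · obtain ⟨δ, hδ, hγδ, hδβ⟩ := happrox (succ γ) (hlim.succ_lt hγ)
    exact (hδ.2 γ (succ_le_iff.1 hγδ)).trans hδβ

theorem ClubInOrd.inter {c : Cardinal.{0}} (hc : c.IsRegular) (hc' : ℵ₀ < c)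
    {C D : Set Ordinal.{0}} (hC : ClubInOrd c.ord C) (hD : ClubInOrd c.ord D) :
    ClubInOrd c.ord (C ∩ D) := by
  have hlim := isSuccLimit_ord hc.aleph0_le
  have next : ∀ {E}, ClubInOrd c.ord E → ∀ γ, ∃ δ, γ < c.ord → δ ∈ E ∧ γ < δ := by
    intro E hE γ
    by_cases hγ : γ < c.ord
    · obtain ⟨δ, hδ, hγδ⟩ := hE.2.1 (succ γ) (hlim.succ_lt hγ)
      exact ⟨δ, fun _ => ⟨hδ, succ_le_iff.1 hγδ⟩⟩
    · exact ⟨0, fun h => (hγ h).elim⟩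
  choose nC hnC using next hC
  choose nD hnD using next hD
  refine ⟨fun δ hδ => hC.1 hδ.1, fun β hβ => ?_,
    fun β hβ hlim' happrox => ⟨hC.2.2 β hβ hlim' fun γ hγ => ?_, hD.2.2 β hβ hlim' fun γ hγ => ?_⟩⟩
  · have hF : ∀ γ < c.ord, max (nC γ) (nD γ) < c.ord := fun γ hγ =>
      max_lt (hC.1 (hnC γ hγ).1) (hD.1 (hnD γ hγ).1)
    obtain ⟨ε, hεc, hβε, hε⟩ := exists_closurePoint hc hc' hF hβ
    have hε0 : ε ≠ 0 := (hβε.trans_le' zero_le).ne'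
    refine ⟨ε, ⟨?_, ?_⟩, hβε.le⟩
    · exact hC.mem_of_forall_exists_lt hεc hε0 fun γ hγ => ⟨nC γ, (hnC γ (hγ.trans hεc)).1,
        (hnC γ (hγ.trans hεc)).2, (le_max_left _ _).trans_lt (hε γ hγ)⟩
    · exact hD.mem_of_forall_exists_lt hεc hε0 fun γ hγ => ⟨nD γ, (hnD γ (hγ.trans hεc)).1,
        (hnD γ (hγ.trans hεc)).2, (le_max_right _ _).trans_lt (hε γ hγ)⟩
  · obtain ⟨δ, hδ, h⟩ := happrox γ hγ
    exact ⟨δ, hδ.1, h⟩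
  · obtain ⟨δ, hδ, h⟩ := happrox γ hγ
    exact ⟨δ, hδ.2, h⟩

theorem StationaryInOrd.exists_mem_closed {c : Cardinal.{0}} (hc : c.IsRegular) (hc' : ℵ₀ < c)
    {S C : Set Ordinal.{0}} (hS : StationaryInOrd c.ord S) (hC : ClubInOrd c.ord C)
    {ν : Ordinal.{0}} (hν : ν < c.ord) {G : Ordinal.{0} → Ordinal.{0} → Ordinal.{0}}
    (hG : ∀ k < c.ord, ∀ j < ν, G k j < c.ord) :
    ∃ β ∈ S, β ∈ C ∧ ∀ k < β, ∀ j < ν, G k j < β := by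
  have hlim := isSuccLimit_ord hc.aleph0_le
  let F : Ordinal.{0} → Ordinal.{0} := fun k => ⨆ j : Iio ν, succ (G k j)
  have hF : ∀ k < c.ord, F k < c.ord := fun k hk =>
    iSup_lt_ord_of_lift_lt hc (mk_Iio_lt_lift hν) fun j => hlim.succ_lt (hG k hk j j.2)
  obtain ⟨β, hβS, hβC, -, hβF⟩ := hS.2 _ (hC.inter hc hc' (clubInOrd_closurePoints hc hc' hF))
  refine ⟨β, hβS, hβC, fun k hk j hj => ?_⟩
  calc G k j < succ (G k j) := lt_succ _
    _ ≤ F k := Ordinal.le_iSup (fun j : Iio ν => succ (G k j)) ⟨j, hj⟩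
    _ < β := hβF k hk

theorem isClubIn_image2_Iio {α : Type 1} {μ : Cardinal.{0}} (hμ : μ.IsRegular)
    (h : Ordinal.{0} → Ordinal.{0} → α) :
    IsClubIn (Cardinal.lift.{1} μ) (image2 h (Iio μ.ord) (Iio μ.ord))
      ((fun ρ => image2 h (Iio ρ) (Iio ρ)) '' Iio μ.ord) := by
  have hlim := isSuccLimit_ord hμ.aleph0_le
  have mono : ∀ {ρ σ : Ordinal.{0}}, ρ ≤ σ → image2 h (Iio ρ) (Iio ρ) ⊆ image2 h (Iio σ) (Iio σ) :=
    fun hρσ => image2_subset (Iio_subset_Iio hρσ) (Iio_subset_Iio hρσ)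
  have small : ∀ ρ < μ.ord, image2 h (Iio ρ) (Iio ρ) ∈ SmallSets (lift.{1} μ)
      (image2 h (Iio μ.ord) (Iio μ.ord)) := fun ρ hρ =>
    ⟨mono hρ.le, mk_image2_le.trans_lt
      (mul_lt_of_lt (aleph0_le_lift.2 hμ.aleph0_le) (mk_Iio_lt_lift hρ) (mk_Iio_lt_lift hρ))⟩
  refine ⟨image_subset_iff.2 small, fun y ⟨hyX, hy⟩ => ?_, fun ι _ _ hι g _ hg => ?_⟩
  · have hr : ∀ w : y, ∃ ρ < μ.ord, (w : α) ∈ image2 h (Iio ρ) (Iio ρ) := by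
      intro ⟨w, hw⟩
      obtain ⟨ζ, hζ, ξ, hξ, rfl⟩ := hyX hw
      exact ⟨succ (max ζ ξ), hlim.succ_lt (max_lt hζ hξ),
        mem_image2_of_mem (lt_succ_of_le (le_max_left ζ ξ)) (lt_succ_of_le (le_max_right ζ ξ))⟩
    choose r hrμ hr using hr
    have hbdd : BddAbove (range r) := ⟨μ.ord, forall_mem_range.2 fun i => (hrμ i).le⟩
    exact ⟨_, ⟨_, iSup_lt_ord_of_lift_lt hμ hy hrμ, rfl⟩, fun w hw =>
      mono (le_ciSup hbdd ⟨w, hw⟩) (hr ⟨w, hw⟩)⟩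
  · choose r hrμ hr using hg
    have hbdd : BddAbove (range r) := ⟨μ.ord, forall_mem_range.2 fun i => (hrμ i).le⟩
    refine ⟨_, iSup_lt_ord_of_lift_lt hμ hι hrμ,
      Subset.antisymm ?_ (iUnion_subset fun i => hr i ▸ mono (le_ciSup hbdd i))⟩
    rintro _ ⟨ζ, hζ, ξ, hξ, rfl⟩
    obtain ⟨i, hi⟩ := (lt_ciSup_iff hbdd).1 (max_lt hζ hξ)
    exact mem_iUnion.2 ⟨i, hr i ▸ mem_image2_of_mem ((le_max_left ζ ξ).trans_lt hi)
      ((le_max_right ζ ξ).trans_lt hi)⟩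

theorem StrictMonoOn.image_inter_Iio_apply {α β : Type*} [LinearOrder α] [Preorder β]
    {e : α → β} {s : Set α} (he : StrictMonoOn e s) {ρ : α} (hρ : ρ ∈ s) :
    e '' s ∩ Iio (e ρ) = e '' (s ∩ Iio ρ) := by
  ext w
  constructor
  · rintro ⟨⟨ζ, hζ, rfl⟩, hlt⟩
    exact ⟨ζ, ⟨hζ, (he.lt_iff_lt hζ hρ).1 hlt⟩, rfl⟩
  · rintro ⟨ζ, ⟨hζ, hlt⟩, rfl⟩
    exact ⟨⟨ζ, hζ, rfl⟩, he hζ hρ hlt⟩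

theorem exists_strictMonoOn_image_eq_of_otp_eq {E : Set Ordinal.{0}} {ν : Ordinal.{0}}
    (h : otp E = Ordinal.lift.{1} ν) :
    ∃ e : Ordinal.{0} → Ordinal.{0}, StrictMonoOn e (Iio ν) ∧ e '' Iio ν = E := by
  rw [← Ordinal.type_lt_Iio, otp, Ordinal.type_eq] at h
  obtain ⟨φ⟩ := h
  refine ⟨fun ζ => if hζ : ζ ∈ Iio ν then φ.symm ⟨ζ, hζ⟩ else 0, fun a ha b hb hab => ?_, ?_⟩
  · simp only [dif_pos ha, dif_pos hb]
    exact φ.symm.map_rel_iff.2 (show (⟨a, ha⟩ : Iio ν) < ⟨b, hb⟩ from hab)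
  · ext w
    refine ⟨?_, fun hw => ⟨φ ⟨w, hw⟩, (φ ⟨w, hw⟩).2, by simp⟩⟩
    rintro ⟨ζ, hζ, rfl⟩
    simp only [dif_pos hζ]
    exact (φ.symm ⟨ζ, hζ⟩).2

theorem exists_image_Iio_ord_eq_Iic {μ : Cardinal.{0}} (hμ : ℵ₀ ≤ μ) {δ : Ordinal.{0}}
    (hδ : δ < (succ μ).ord) : ∃ f : Ordinal.{0} → Ordinal.{0}, f '' Iio μ.ord = Iic δ := by
  have hcard : #(Iic δ) ≤ #(Iio μ.ord) := by
    rw [← Iio_succ, Cardinal.mk_Iio_ordinal, Cardinal.mk_Iio_ordinal, card_ord, lift_le,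
      ← lt_succ_iff, ← lt_ord]
    exact (isSuccLimit_ord (hμ.trans (le_succ μ))).succ_lt hδ
  obtain ⟨i⟩ := hcard
  have : Nonempty (Iic δ) := ⟨⟨δ, mem_Iic.2 le_rfl⟩⟩
  let s : Iio μ.ord → Iic δ := Function.invFun i
  have hs : Function.Surjective s := Function.invFun_surjective i.injective
  refine ⟨fun ξ => if hξ : ξ ∈ Iio μ.ord then s ⟨ξ, hξ⟩ else δ, ?_⟩
  ext w
  refine ⟨?_, fun hw => ?_⟩
  · rintro ⟨ξ, hξ, rfl⟩
    simp only [dif_pos hξ]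
    exact (s _).2
  · obtain ⟨⟨ξ, hξ⟩, hξw⟩ := hs ⟨w, hw⟩
    exact ⟨ξ, hξ, by simp only [dif_pos hξ, hξw]⟩

theorem Set.PairwiseDisjoint.exists_selector {ι κ β : Type*} {S T : Set κ} {𝒮 : κ → Set β}
    (h : S.PairwiseDisjoint 𝒮) (hST : S ⊆ T) (hT : T.Nonempty) (x : ι → β) :
    ∃ G : ι → κ, (∀ i, G i ∈ T) ∧ ∀ i, ∀ α ∈ S, x i ∈ 𝒮 α → G i = α := by
  have hsel : ∀ i, ∃ g ∈ T, ∀ α ∈ S, x i ∈ 𝒮 α → g = α := fun i => by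
    by_cases hi : ∃ α ∈ S, x i ∈ 𝒮 α
    · obtain ⟨α, hα, hxα⟩ := hi
      exact ⟨α, hST hα, fun α' hα' hxα' => h.elim_set hα hα' _ hxα hxα'⟩
    · exact ⟨hT.some, hT.some_mem, fun α hα hxα => (hi ⟨α, hα, hxα⟩).elim⟩
  choose G hGT hG using hsel
  exact ⟨G, hGT, hG⟩

theorem image2_eq_Iio_of_forall_image_eq_Iic {α γ : Type*} [LinearOrder α] {E : Set α} {β : α}
    {t : Set γ} {f : α → γ → α} (hEβ : E ⊆ Iio β) (hE : ∀ w < β, ∃ δ ∈ E, w ≤ δ)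
    (hf : ∀ δ ∈ E, f δ '' t = Iic δ) : image2 f E t = Iio β := by
  ext w
  constructor
  · rintro ⟨δ, hδ, ξ, hξ, rfl⟩
    have hle : f δ ξ ∈ Iic δ := hf δ hδ ▸ mem_image_of_mem _ hξ
    exact lt_of_le_of_lt hle (hEβ hδ)
  · intro hw
    obtain ⟨δ, hδ, hwδ⟩ := hE w hw
    obtain ⟨ξ, hξ, rfl⟩ : w ∈ f δ '' t := (hf δ hδ).symm ▸ hwδ
    exact ⟨δ, hδ, ξ, hξ, rfl⟩

theorem stmt10_general (μ : Cardinal.{0}) (hreg : μ.IsRegular)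
    (S : Set Ordinal.{0}) (hS : ∀ α ∈ S, α < (Order.succ μ).ord ∧ α.cof = μ)
    (hSstat : StationaryInOrd (Order.succ μ).ord S)
    (𝒮 : Ordinal.{0} → Set (Set Ordinal.{0}))
    (hstat : ∀ α ∈ S, IsStationaryIn (Cardinal.lift.{1} μ) (Set.Iio α) (𝒮 α))
    (hdisj : ∀ α ∈ S, ∀ β ∈ S, α ≠ β → 𝒮 α ∩ 𝒮 β = ∅) :
    ¬ ∃ (a : Ordinal.{0} → Set Ordinal.{0}) (C : Set Ordinal.{0}),
        (∀ α < (Order.succ μ).ord,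
          a α ∈ SmallSets (Cardinal.lift.{1} μ) (Set.Iio (Order.succ μ).ord)) ∧
        ClubInOrd (Order.succ μ).ord C ∧
        ∀ γ ∈ C, ApproachablePt a γ := by
  rintro ⟨a, C, -, hC, happ⟩
  have hμ : ℵ₀ ≤ μ := hreg.aleph0_le
  have hμμ' : μ.ord < (succ μ).ord := ord_lt_ord.2 (lt_succ μ)
  choose! f hf using fun δ (hδ : δ < (succ μ).ord) => exists_image_Iio_ord_eq_Iic hμ hδ
  obtain ⟨G, hGlt, hG⟩ := Set.PairwiseDisjoint.exists_selector
    (fun α hα α' hα' h => disjoint_iff_inter_eq_empty.2 (hdisj α hα α' hα' h))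
    (fun α hα => (hS α hα).1) ⟨0, zero_le.trans_lt hμμ'⟩
    fun p : Ordinal.{0} × Ordinal.{0} => image2 f (a p.1) (Iio p.2)
  obtain ⟨β, hβS, hβC, hβG⟩ := hSstat.exists_mem_closed (G := Function.curry G)
    (isRegular_succ hμ) (hμ.trans_lt (lt_succ μ)) hC hμμ' fun k _ j _ => hGlt (k, j)
  obtain ⟨hβ, hβcof⟩ := hS β hβS
  obtain ⟨E, hEβ, hEcof, hEotp, hEa⟩ := happ β hβC
  obtain ⟨e, he, rfl⟩ := exists_strictMonoOn_image_eq_of_otp_eq (hβcof ▸ hEotp)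
  have hclub := isClubIn_image2_Iio hreg fun ζ ξ => f (e ζ) ξ
  rw [← image2_image_left, image2_eq_Iio_of_forall_image_eq_Iic hEβ hEcof
    fun δ hδ => hf δ ((hEβ hδ).trans hβ)] at hclub
  obtain ⟨_, hx𝒮, ρ, hρ, rfl⟩ := (hstat β hβS).2 _ hclub
  obtain ⟨k, hkβ, hk⟩ := hEa (e ρ) (hEβ ⟨ρ, hρ, rfl⟩)
  have hxk : image2 (fun ζ ξ => f (e ζ) ξ) (Iio ρ) (Iio ρ) = image2 f (a k) (Iio ρ) := by
    rw [← hk, he.image_inter_Iio_apply hρ, inter_eq_right.2 (Iio_subset_Iio hρ.le),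
      image2_image_left]
  exact (hβG k hkβ ρ hρ).ne (hG (k, ρ) β hβS (hxk ▸ hx𝒮))

/-- A disjoint stationary sequence on `μ⁺` implies the failure of the approachability
property `AP_μ`, i.e. `μ⁺ ∉ I[μ⁺]`. -/
theorem stmt10 (μ : Cardinal.{0}) (hreg : μ.IsRegular) (hunc : ℵ₀ < μ)
    (S : Set Ordinal.{0}) (hS : ∀ α ∈ S, α < (Order.succ μ).ord ∧ α.cof = μ)
    (hSstat : StationaryInOrd (Order.succ μ).ord S)
    (𝒮 : Ordinal.{0} → Set (Set Ordinal.{0}))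
    (hstat : ∀ α ∈ S, IsStationaryIn (Cardinal.lift.{1} μ) (Set.Iio α) (𝒮 α))
    (hdisj : ∀ α ∈ S, ∀ β ∈ S, α ≠ β → 𝒮 α ∩ 𝒮 β = ∅) :
    ¬ ∃ (a : Ordinal.{0} → Set Ordinal.{0}) (C : Set Ordinal.{0}),
        (∀ α < (Order.succ μ).ord,
          a α ∈ SmallSets (Cardinal.lift.{1} μ) (Set.Iio (Order.succ μ).ord)) ∧
        ClubInOrd (Order.succ μ).ord C ∧
        ∀ γ ∈ C, ApproachablePt a γ :=
  stmt10_general μ hreg S hS hSstat 𝒮 hstat hdisj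
end
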